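/- Let A = Q exp(P_j) with Q orthogonal and P_j symmetric, let E be SPD, and set C = A E Aᵀ and C̄ = A Aᵀ. Then log(C̄^{-1/2} C C̄^{-1/2}) = Q log(E) Qᵀ. -/

import Mathlib

open Matrix

/-- Square root of a symmetric positive definite matrix, via the
continuous functional calculus (spectral decomposition). -/
noncomputable def msqrt {D : ℕ} (A : Matrix (Fin D) (Fin D) ℝ) : Matrix (Fin D) (Fin D) ℝ :=
  cfc Real.sqrt A

/-- Principal matrix logarithm of a symmetric positive definite matrix,
via the continuous functional calculus (spectral decomposition). -/
noncomputable def mlog {D : ℕ} (A : Matrix (Fin D) (Fin D) ℝ) : Matrix (Fin D) (Fin D) ℝ :=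
  cfc Real.log A

/-- Real (fractional) power of a symmetric positive definite matrix,
defined spectrally: each eigenvalue is raised to the power `t`. -/
noncomputable def mpow {D : ℕ} (A : Matrix (Fin D) (Fin D) ℝ) (t : ℝ) : Matrix (Fin D) (Fin D) ℝ :=
  cfc (fun x : ℝ => x ^ t) A

/-- Frobenius norm of a real matrix. -/
noncomputable def frob {D : ℕ} (A : Matrix (Fin D) (Fin D) ℝ) : ℝ :=
  Real.sqrt (∑ i, ∑ j, (A i j) ^ 2)

/-- Affine-invariant Riemannian distance on SPD matrices:
`δ(C1, C2) = ‖log(C1^{-1/2} C2 C1^{-1/2})‖_F`. -/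
noncomputable def airm {D : ℕ} (C1 C2 : Matrix (Fin D) (Fin D) ℝ) : ℝ :=
  frob (mlog ((msqrt C1)⁻¹ * C2 * (msqrt C1)⁻¹))

section Aux
attribute [local instance] Matrix.linftyOpNormedRing Matrix.linftyOpNormedAlgebra

variable {D : ℕ}

lemma aux_contOn (f : ℝ → ℝ) (A : Matrix (Fin D) (Fin D) ℝ) : ContinuousOn f (spectrum ℝ A) :=
  (Matrix.finite_real_spectrum (A := A)).continuousOn f

/-- Conjugation by an orthogonal matrix as a star algebra homomorphism. -/
noncomputable def conjHom (Q : Matrix (Fin D) (Fin D) ℝ) (hQ : Qᵀ * Q = 1) :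
    Matrix (Fin D) (Fin D) ℝ →⋆ₐ[ℝ] Matrix (Fin D) (Fin D) ℝ where
  toFun x := Q * x * Qᵀ
  map_one' := by
    have h : Q * Qᵀ = 1 := mul_eq_one_comm.mp hQ
    simp [h]
  map_mul' x y := by
    have h : Q * Qᵀ = 1 := mul_eq_one_comm.mp hQ
    calc Q * (x * y) * Qᵀ = (Q * x) * (Qᵀ * Q) * (y * Qᵀ) := by
          rw [hQ]; noncomm_ring
      _ = (Q * x * Qᵀ) * (Q * y * Qᵀ) := by noncomm_ring
  map_zero' := by simp
  map_add' x y := by noncomm_ring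
  commutes' r := by
    have h : Q * Qᵀ = 1 := mul_eq_one_comm.mp hQ
    simp [Algebra.algebraMap_eq_smul_one, Matrix.mul_smul, Matrix.smul_mul, h]
  map_star' x := by
    simp only [star_eq_conjTranspose, conjTranspose_eq_transpose_of_trivial,
      transpose_mul, transpose_transpose, Matrix.mul_assoc]

lemma conjHom_continuous (Q : Matrix (Fin D) (Fin D) ℝ) (hQ : Qᵀ * Q = 1) :
    Continuous (conjHom Q hQ) := by
  show Continuous fun x : Matrix (Fin D) (Fin D) ℝ => Q * x * Qᵀ
  fun_prop

lemma cfc_conj (f : ℝ → ℝ) (Q a : Matrix (Fin D) (Fin D) ℝ) (hQ : Qᵀ * Q = 1)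
    (ha : IsSelfAdjoint a) :
    cfc f (Q * a * Qᵀ) = Q * cfc f a * Qᵀ := by
  have hsa : IsSelfAdjoint ((conjHom Q hQ) a) := ha.map (conjHom Q hQ)
  exact (StarAlgHomClass.map_cfc (conjHom Q hQ) f a (aux_contOn f a)
    (conjHom_continuous Q hQ) ha hsa).symm

lemma exp_eq_cfc (Pj : Matrix (Fin D) (Fin D) ℝ) (hPj : IsSelfAdjoint Pj) :
    NormedSpace.exp Pj = cfc Real.exp Pj :=
  (@CFC.real_exp_eq_normedSpace_exp _ _ _ _ Matrix.IsHermitian.instContinuousFunctionalCalculus _ hPj).symm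

end Aux

/-- Recentering removes the domain-specific scaling: with `A = Q exp(Pj)`
(`Q` orthogonal, `Pj` symmetric), `E` SPD, `C = A E Aᵀ` and `C̄ = A Aᵀ`, we have
`log(C̄^{-1/2} C C̄^{-1/2}) = Q log(E) Qᵀ`. -/
theorem recentering_removes_scaling {D : ℕ} (Q Pj E : Matrix (Fin D) (Fin D) ℝ)
    (hQ : Qᵀ * Q = 1) (hPj : Pjᵀ = Pj) (hE : E.PosDef) :
    mlog ((msqrt ((Q * NormedSpace.exp Pj) * (Q * NormedSpace.exp Pj)ᵀ))⁻¹ *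
        ((Q * NormedSpace.exp Pj) * E * (Q * NormedSpace.exp Pj)ᵀ) *
        (msqrt ((Q * NormedSpace.exp Pj) * (Q * NormedSpace.exp Pj)ᵀ))⁻¹) =
      Q * mlog E * Qᵀ := by
  set Ex := NormedSpace.exp Pj with hEx
  have hPjsa : IsSelfAdjoint Pj := by
    rw [isSelfAdjoint_iff, star_eq_conjTranspose, conjTranspose_eq_transpose_of_trivial, hPj]
  have hExcfc : Ex = cfc Real.exp Pj := exp_eq_cfc Pj hPjsa
  have hExT : Exᵀ = Ex := by
    rw [hEx, ← Matrix.exp_transpose, hPj]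
  have hQQT : Q * Qᵀ = 1 := mul_eq_one_comm.mp hQ
  have hExEx_sa : IsSelfAdjoint (Ex * Ex) := by
    rw [isSelfAdjoint_iff, star_eq_conjTranspose, conjTranspose_eq_transpose_of_trivial,
      transpose_mul, hExT]
  have hCbar : (Q * Ex) * (Q * Ex)ᵀ = Q * (Ex * Ex) * Qᵀ := by
    rw [transpose_mul, hExT]; noncomm_ring
  have hsq : cfc Real.sqrt (Ex * Ex) = Ex := by
    conv_lhs => rw [hExcfc]
    rw [← cfc_mul Real.exp Real.exp Pj (aux_contOn _ _) (aux_contOn _ _),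
      ← cfc_comp Real.sqrt (fun x => Real.exp x * Real.exp x) Pj hPjsa
        Real.continuous_sqrt.continuousOn (by fun_prop)]
    conv_rhs => rw [hExcfc]
    apply cfc_congr fun x _ => Real.sqrt_mul_self (Real.exp_pos x).le
  have hsqrt : msqrt (Q * (Ex * Ex) * Qᵀ) = Q * Ex * Qᵀ := by
    rw [msqrt, cfc_conj _ _ _ hQ hExEx_sa, hsq]
  have hExunit : IsUnit Ex.det :=
    (Matrix.isUnit_iff_isUnit_det _).mp (Matrix.isUnit_exp Pj)
  have hinv : (Q * Ex * Qᵀ)⁻¹ = Q * Ex⁻¹ * Qᵀ := by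
    rw [Matrix.mul_inv_rev, Matrix.mul_inv_rev, Matrix.inv_eq_left_inv hQ,
      Matrix.inv_eq_left_inv hQQT]
    noncomm_ring
  have cQ : ∀ X : Matrix (Fin D) (Fin D) ℝ, Qᵀ * (Q * X) = X := fun X => by
    rw [← Matrix.mul_assoc, hQ, one_mul]
  have cE1 : ∀ X : Matrix (Fin D) (Fin D) ℝ, Ex⁻¹ * (Ex * X) = X := fun X => by
    rw [← Matrix.mul_assoc, Matrix.nonsing_inv_mul _ hExunit, one_mul]
  have cE2 : ∀ X : Matrix (Fin D) (Fin D) ℝ, Ex * (Ex⁻¹ * X) = X := fun X => by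
    rw [← Matrix.mul_assoc, Matrix.mul_nonsing_inv _ hExunit, one_mul]
  have hmid : (Q * Ex⁻¹ * Qᵀ) * ((Q * Ex) * E * (Q * Ex)ᵀ) * (Q * Ex⁻¹ * Qᵀ) = Q * E * Qᵀ := by
    rw [transpose_mul, hExT]
    simp only [Matrix.mul_assoc]
    rw [cQ, cQ, cE1, cE2]
  have hEsa : IsSelfAdjoint E := by
    rw [isSelfAdjoint_iff, star_eq_conjTranspose]; exact hE.isHermitian
  rw [hCbar, hsqrt, hinv, hmid, mlog, mlog, cfc_conj _ _ _ hQ hEsa]
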